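/- Let G be a finite, connected graph that is not balanced bipartite (it admits no bipartition V = A ∪ B with #A = #B), and let α = 1. Then for every S ⊆ {1,…,m}, the restriction of L to the face Δ_S is strictly concave; consequently each Λ_S contains at most one point and Λ is finite. -/

import Mathlib

open MeasureTheory Filter Topology

/-- The domain `Δ`: nonnegative vectors summing to `1` whose coordinates sum to at least `c`
on every edge of `G`. -/
def simplexDomain (m : ℕ) (G : SimpleGraph (Fin m)) (c : ℝ) : Set (Fin m → ℝ) :=
  {x | (∀ i, 0 ≤ x i) ∧ (∑ i, x i) = 1 ∧ ∀ i j, G.Adj i j → c ≤ x i + x j}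

/-- The vector field `F` of the urn process:
`F_i(x) = -x_i + (1/N) ∑_{j ∼ i} x_i^α / (x_i^α + x_j^α)`. -/
noncomputable def urnField (m : ℕ) (G : SimpleGraph (Fin m)) [DecidableRel G.Adj] (α : ℝ)
    (x : Fin m → ℝ) : Fin m → ℝ :=
  fun i => -x i + (1 / (G.edgeFinset.card : ℝ)) *
    ∑ j ∈ G.neighborFinset i, x i ^ α / (x i ^ α + x j ^ α)

/-- The equilibria set `Λ` of the vector field `F` on `Δ`. -/
def equilibria (m : ℕ) (G : SimpleGraph (Fin m)) [DecidableRel G.Adj] (α c : ℝ) :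
    Set (Fin m → ℝ) :=
  {x ∈ simplexDomain m G c | urnField m G α x = 0}

/-- The strict Lyapunov function
`L(v) = -∑ i, v i + (1/(αN)) ∑_{{i,j} ∈ E} log (v_i^α + v_j^α)`. -/
noncomputable def lyap (m : ℕ) (G : SimpleGraph (Fin m)) [DecidableRel G.Adj] (α : ℝ)
    (v : Fin m → ℝ) : ℝ :=
  -∑ i, v i + (1 / (α * (G.edgeFinset.card : ℝ))) *
    ∑ e ∈ G.edgeFinset,
      Sym2.lift ⟨fun i j => Real.log (v i ^ α + v j ^ α), fun _ _ => congrArg Real.log (add_comm _ _)⟩ e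

/-- The partial derivative `∂L/∂v_i (v) = -1 + (1/N) ∑_{j ∼ i} v_i^(α-1) / (v_i^α + v_j^α)`
of the Lyapunov function `L`. -/
noncomputable def lyapGrad (m : ℕ) (G : SimpleGraph (Fin m)) [DecidableRel G.Adj] (α : ℝ)
    (v : Fin m → ℝ) (i : Fin m) : ℝ :=
  -1 + (1 / (G.edgeFinset.card : ℝ)) *
    ∑ j ∈ G.neighborFinset i, v i ^ (α - 1) / (v i ^ α + v j ^ α)

/-- The face `Δ_S` of `Δ` determined by `S`: the points of `Δ` vanishing exactly off `S`. -/
def faceDomain (m : ℕ) (G : SimpleGraph (Fin m)) (c : ℝ) (S : Finset (Fin m)) :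
    Set (Fin m → ℝ) :=
  {v ∈ simplexDomain m G c | ∀ i, v i = 0 ↔ i ∉ S}

/-- The set `Λ_S` of `S`-singularities of `L`: points of `Δ_S` where `∂L/∂v_i = 0` for all
`i ∈ S`. -/
noncomputable def faceSingularities (m : ℕ) (G : SimpleGraph (Fin m)) [DecidableRel G.Adj]
    (α c : ℝ) (S : Finset (Fin m)) : Set (Fin m → ℝ) :=
  {v ∈ faceDomain m G c S | ∀ i ∈ S, lyapGrad m G α v i = 0}

/-!
For `α = 1`, on `Δ` the function `L` is a constant plus `(1/N) ∑_e log (v_i + v_j)`, a sum of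
logarithms of positive linear forms; it is therefore concave, and strictly concave as soon as the
edge sums `v_i + v_j` determine `v` on `Δ`. They do: the difference `d` of two points with the same
edge sums satisfies `d_j = -d_i` along edges, so on a connected graph `d = ±t` with the signs
forming a bipartition, and `∑ d = 0` makes that bipartition balanced unless `t = 0`.

At a point `x ∈ Λ_S` we have `∑_{j ∼ i} 1/(x_i + x_j) = N` for `i ∈ S`, whence
`∑_i ∑_{j ∼ i} (y_i + y_j)/(x_i + x_j) = 2N` for every `y ∈ Δ_S`. Adding the same identity with
`x` and `y` exchanged and comparing with `Y/X + X/Y ≥ 2` forces equal edge sums, so `x = y`.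
-/

open Finset Real

namespace SimpleGraph

variable {V : Type*} [Fintype V] {G : SimpleGraph V}

def IsBalancedBipartition (G : SimpleGraph V) (A : Finset V) : Prop :=
  (∀ i j, G.Adj i j → (i ∈ A ↔ j ∉ A)) ∧ 2 * #A = Fintype.card V

omit [Fintype V] in
theorem Preconnected.eq_or_eq_neg_of_adj_add_eq_zero {K : Type*} [AddGroup K]
    (hG : G.Preconnected) {d : V → K} (hd : ∀ i j, G.Adj i j → d i + d j = 0) (i j : V) :
    d j = d i ∨ d j = -d i := by
  obtain ⟨w⟩ := hG i j
  induction w with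
  | nil => exact Or.inl rfl
  | @cons u v _ huv _ ih =>
    rw [eq_neg_of_add_eq_zero_right (hd u v huv)] at ih
    rcases ih with h | h
    · exact Or.inr h
    · exact Or.inl (h.trans (neg_neg _))

theorem Connected.eq_zero_of_adj_add_eq_zero {K : Type*} [Field K] [CharZero K]
    (hG : G.Connected) (hbb : ¬ ∃ A, G.IsBalancedBipartition A) {d : V → K}
    (hsum : ∑ i, d i = 0) (hd : ∀ i j, G.Adj i j → d i + d j = 0) : d = 0 := by
  classical
  by_contra hne
  obtain ⟨i₀, hi₀⟩ := Function.ne_iff.1 hne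
  set t := d i₀
  have ht : t ≠ 0 := hi₀
  have hsign := hG.preconnected.eq_or_eq_neg_of_adj_add_eq_zero hd i₀
  have hneg : ∀ j, d j ≠ t ↔ d j = -t := fun j =>
    ⟨(hsign j).resolve_left, fun h h' => ht (CharZero.neg_eq_self_iff.1 (h.symm.trans h'))⟩
  set A := univ.filter fun j => d j = t
  have hcompl : ∀ j ∈ Aᶜ, d j = -t := fun j hj => (hneg j).1 (by simpa [A] using hj)
  refine hbb ⟨A, fun i j hij => ?_, ?_⟩
  · have hj : d j = -d i := eq_neg_of_add_eq_zero_right (hd i j hij)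
    simp only [A, mem_filter, mem_univ, true_and, hj, neg_eq_iff_eq_neg]
    rw [← hneg i, not_not]
  · have hcard : (#A : K) * t = #Aᶜ * t := by
      rw [← sum_add_sum_compl A d, sum_congr rfl (fun j hj => (mem_filter.1 hj).2),
        sum_congr rfl hcompl] at hsum
      simp only [sum_const, nsmul_eq_mul] at hsum
      linear_combination hsum
    have hsplit := card_add_card_compl A
    have hhalf : #A = #Aᶜ := by exact_mod_cast mul_right_cancel₀ ht hcard
    omega

theorem Connected.eq_of_sum_eq_of_adj_add_eq {K : Type*} [Field K] [CharZero K]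
    (hG : G.Connected) (hbb : ¬ ∃ A, G.IsBalancedBipartition A) {x y : V → K}
    (hsum : ∑ i, x i = ∑ i, y i) (hxy : ∀ i j, G.Adj i j → x i + x j = y i + y j) : x = y :=
  sub_eq_zero.1 <| hG.eq_zero_of_adj_add_eq_zero hbb
    (by simp only [Pi.sub_apply, sum_sub_distrib, hsum, sub_self])
    fun i j hij => by simp only [Pi.sub_apply]; linear_combination hxy i j hij

variable [DecidableRel G.Adj]

theorem sum_neighborFinset_comm {M : Type*} [AddCommMonoid M] (f : V → V → M) :
    ∑ i, ∑ j ∈ G.neighborFinset i, f i j = ∑ i, ∑ j ∈ G.neighborFinset i, f j i := by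
  simp only [neighborFinset_eq_filter, sum_filter]
  rw [sum_comm]
  simp only [G.adj_comm]

theorem sum_neighborFinset_add_mul {R : Type*} [CommSemiring R] (y : V → R) {w : V → V → R}
    (hw : ∀ i j, w i j = w j i) :
    ∑ i, ∑ j ∈ G.neighborFinset i, (y i + y j) * w i j =
      2 * ∑ i, y i * ∑ j ∈ G.neighborFinset i, w i j := by
  have hswap : ∑ i, ∑ j ∈ G.neighborFinset i, y j * w i j =
      ∑ i, ∑ j ∈ G.neighborFinset i, y i * w i j := by
    rw [sum_neighborFinset_comm]
    simp only [hw]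
  simp only [add_mul, sum_add_distrib, hswap, ← two_mul, mul_sum]

/-- `4 * #G.edgeFinset` is the sum of `2 ≤ Y / X + X / Y` over the darts of `G`. -/
theorem eq_of_sum_neighborFinset_div_add_div {X Y : V → V → ℝ}
    (hX : ∀ i j, G.Adj i j → 0 < X i j) (hY : ∀ i j, G.Adj i j → 0 < Y i j)
    (h : ∑ i, ∑ j ∈ G.neighborFinset i, (Y i j / X i j + X i j / Y i j) = 4 * #G.edgeFinset)
    {i j : V} (hij : G.Adj i j) : X i j = Y i j := by
  have hsq : ∀ i, ∀ j ∈ G.neighborFinset i,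
      Y i j / X i j + X i j / Y i j - 2 = (X i j - Y i j) ^ 2 / (X i j * Y i j) := by
    intro i j hj
    have := hX i j ((mem_neighborFinset G i j).1 hj)
    have := hY i j ((mem_neighborFinset G i j).1 hj)
    field_simp
    ring
  have hnonneg : ∀ i, ∀ j ∈ G.neighborFinset i, 0 ≤ (X i j - Y i j) ^ 2 / (X i j * Y i j) := by
    intro i j hj
    have := hX i j ((mem_neighborFinset G i j).1 hj)
    have := hY i j ((mem_neighborFinset G i j).1 hj)
    positivity
  have hdarts : ∑ i, ∑ j ∈ G.neighborFinset i, (2 : ℝ) = 4 * #G.edgeFinset := by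
    simp only [sum_const, card_neighborFinset_eq_degree, nsmul_eq_mul, ← sum_mul]
    rw [← Nat.cast_sum, sum_degrees_eq_twice_card_edges]
    push_cast
    ring
  have hzero : ∑ i, ∑ j ∈ G.neighborFinset i, (X i j - Y i j) ^ 2 / (X i j * Y i j) = 0 := by
    rw [← sum_congr rfl fun i _ => sum_congr rfl (hsq i)]
    simp only [sum_sub_distrib]
    linarith
  have hij' := (sum_eq_zero_iff_of_nonneg (hnonneg i)).1
    ((sum_eq_zero_iff_of_nonneg fun i _ => sum_nonneg (hnonneg i)).1 hzero i (mem_univ i)) j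
    ((mem_neighborFinset G i j).2 hij)
  have := hX i j hij
  have := hY i j hij
  rw [div_eq_zero_iff, pow_eq_zero_iff two_ne_zero, sub_eq_zero] at hij'
  exact hij'.resolve_right (by positivity)

end SimpleGraph

theorem strictConcaveOn_sum_mul_log {ι E : Type*} [AddCommGroup E] [Module ℝ E] {s : Set E}
    (hs : Convex ℝ s) (t : Finset ι) (w : ι → ℝ) (ℓ : ι → E →ₗ[ℝ] ℝ)
    (hw : ∀ i ∈ t, 0 < w i) (hℓ : ∀ x ∈ s, ∀ i ∈ t, 0 < ℓ i x)
    (hsep : ∀ x ∈ s, ∀ y ∈ s, (∀ i ∈ t, ℓ i x = ℓ i y) → x = y) :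
    StrictConcaveOn ℝ s fun x => ∑ i ∈ t, w i * log (ℓ i x) := by
  refine ⟨hs, fun x hx y hy hxy a b ha hb hab => ?_⟩
  obtain ⟨i₀, hi₀, hne⟩ : ∃ i ∈ t, ℓ i x ≠ ℓ i y := by
    by_contra! h
    exact hxy (hsep x hx y hy h)
  have hlog : ∀ i ∈ t, a * log (ℓ i x) + b * log (ℓ i y) ≤ log (ℓ i (a • x + b • y)) :=
    fun i hi => by
      simpa using strictConcaveOn_log_Ioi.concaveOn.2 (hℓ x hx i hi) (hℓ y hy i hi) ha.le hb.le hab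
  have hlog₀ : a * log (ℓ i₀ x) + b * log (ℓ i₀ y) < log (ℓ i₀ (a • x + b • y)) := by
    simpa using strictConcaveOn_log_Ioi.2 (hℓ x hx i₀ hi₀) (hℓ y hy i₀ hi₀) hne ha hb hab
  simp only [smul_eq_mul, mul_sum, ← sum_add_distrib]
  refine sum_lt_sum (fun i hi => ?_) ⟨i₀, hi₀, ?_⟩
  · linear_combination mul_le_mul_of_nonneg_left (hlog i hi) (hw i hi).le
  · linear_combination mul_lt_mul_of_pos_left hlog₀ (hw i₀ hi₀)

noncomputable def edgeSum {V : Type*} (e : Sym2 V) : (V → ℝ) →ₗ[ℝ] ℝ :=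
  Sym2.lift ⟨fun i j => LinearMap.proj i + LinearMap.proj j, fun _ _ => add_comm _ _⟩ e

@[simp]
theorem edgeSum_mk {V : Type*} (i j : V) (v : V → ℝ) : edgeSum s(i, j) v = v i + v j := rfl

section Faces

variable {m : ℕ} {G : SimpleGraph (Fin m)} {c : ℝ}

theorem convex_simplexDomain : Convex ℝ (simplexDomain m G c) := by
  rintro x ⟨hx₀, hx₁, hxc⟩ y ⟨hy₀, hy₁, hyc⟩ a b ha hb hab
  refine ⟨fun i => ?_, ?_, fun i j hij => ?_⟩ <;>
    simp only [Pi.add_apply, Pi.smul_apply, smul_eq_mul]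
  · have := hx₀ i
    have := hy₀ i
    positivity
  · rw [sum_add_distrib, ← mul_sum, ← mul_sum, hx₁, hy₁, mul_one, mul_one, hab]
  · have hxa := mul_le_mul_of_nonneg_left (hxc i j hij) ha
    have hyb := mul_le_mul_of_nonneg_left (hyc i j hij) hb
    linear_combination hxa + hyb - c * hab

theorem pos_of_mem_faceDomain {S : Finset (Fin m)} {v : Fin m → ℝ}
    (hv : v ∈ faceDomain m G c S) {i : Fin m} (hi : i ∈ S) : 0 < v i :=
  (hv.1.1 i).lt_of_ne' fun h => (hv.2 i).1 h hi

theorem convex_faceDomain (S : Finset (Fin m)) : Convex ℝ (faceDomain m G c S) := by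
  intro x hx y hy a b ha hb hab
  refine ⟨convex_simplexDomain hx.1 hy.1 ha hb hab, fun i => ?_⟩
  simp only [Pi.add_apply, Pi.smul_apply, smul_eq_mul]
  by_cases hi : i ∈ S
  · have hxi := pos_of_mem_faceDomain hx hi
    have hyi := pos_of_mem_faceDomain hy hi
    simp only [hi, not_true_eq_false, iff_false]
    exact (convex_Ioi (0 : ℝ) hxi hyi ha hb hab).ne'
  · simp [(hx.2 i).2 hi, (hy.2 i).2 hi, hi]

theorem add_pos_of_mem_simplexDomain (hc : 0 < c) {v : Fin m → ℝ}
    (hv : v ∈ simplexDomain m G c) {i j : Fin m} (hij : G.Adj i j) : 0 < v i + v j :=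
  hc.trans_le (hv.2.2 i j hij)

variable [DecidableRel G.Adj]

theorem lyap_one_eq (v : Fin m → ℝ) :
    lyap m G 1 v = -∑ i, v i +
      ∑ e ∈ G.edgeFinset, 1 / (#G.edgeFinset : ℝ) * log (edgeSum e v) := by
  rw [lyap, one_mul, mul_sum]
  congr 1
  refine sum_congr rfl fun e _ => ?_
  induction e using Sym2.ind with
  | _ i j => simp [rpow_one]

theorem strictConcaveOn_lyap_one (hc : 0 < c) (hG : G.Connected)
    (hbb : ¬ ∃ A, G.IsBalancedBipartition A) (S : Finset (Fin m)) :
    StrictConcaveOn ℝ (faceDomain m G c S) (lyap m G 1) := by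
  have hlog := strictConcaveOn_sum_mul_log (convex_faceDomain S) G.edgeFinset
    (fun _ => 1 / (#G.edgeFinset : ℝ)) edgeSum
    (fun e he => by simpa using card_pos.2 ⟨e, he⟩)
    (fun v hv e he => by
      induction e using Sym2.ind with
      | _ i j => exact add_pos_of_mem_simplexDomain hc hv.1 (G.mem_edgeFinset.1 he))
    (fun x hx y hy hxy => hG.eq_of_sum_eq_of_adj_add_eq hbb (hx.1.2.1.trans hy.1.2.1.symm)
      fun i j hij => by simpa using hxy s(i, j) (G.mem_edgeFinset.2 hij))
  refine (hlog.add_const (-1)).congr fun v hv => ?_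
  simp only [Pi.add_apply, lyap_one_eq, hv.1.2.1]
  ring

theorem lyapGrad_one (v : Fin m → ℝ) (i : Fin m) :
    lyapGrad m G 1 v i =
      -1 + 1 / (#G.edgeFinset : ℝ) * ∑ j ∈ G.neighborFinset i, (v i + v j)⁻¹ := by
  simp [lyapGrad]

theorem sum_inv_add_eq_of_mem_faceSingularities {S : Finset (Fin m)} {x : Fin m → ℝ}
    (hx : x ∈ faceSingularities m G 1 c S) {i : Fin m} (hi : i ∈ S) :
    ∑ j ∈ G.neighborFinset i, (x i + x j)⁻¹ = #G.edgeFinset := by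
  have hgrad := hx.2 i hi
  rw [lyapGrad_one] at hgrad
  have h : (∑ j ∈ G.neighborFinset i, (x i + x j)⁻¹) / #G.edgeFinset = 1 := by
    linear_combination hgrad
  exact (div_eq_one_iff_eq fun h₀ => by simp [h₀] at h).1 h

theorem sum_div_eq_of_mem_faceSingularities {S : Finset (Fin m)} {x y : Fin m → ℝ}
    (hx : x ∈ faceSingularities m G 1 c S) (hy : y ∈ faceDomain m G c S) :
    ∑ i, ∑ j ∈ G.neighborFinset i, (y i + y j) / (x i + x j) = 2 * #G.edgeFinset := by
  simp only [div_eq_mul_inv]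
  rw [G.sum_neighborFinset_add_mul y fun i j => by rw [add_comm]]
  have hrow : ∀ i, y i * ∑ j ∈ G.neighborFinset i, (x i + x j)⁻¹ = y i * #G.edgeFinset := by
    intro i
    by_cases hi : i ∈ S
    · rw [sum_inv_add_eq_of_mem_faceSingularities hx hi]
    · rw [(hy.2 i).2 hi, zero_mul, zero_mul]
  simp only [hrow, ← sum_mul, hy.1.2.1, one_mul]

theorem faceSingularities_subsingleton (hc : 0 < c) (hG : G.Connected)
    (hbb : ¬ ∃ A, G.IsBalancedBipartition A) (S : Finset (Fin m)) :
    (faceSingularities m G 1 c S).Subsingleton := by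
  intro x hx y hy
  refine hG.eq_of_sum_eq_of_adj_add_eq hbb (hx.1.1.2.1.trans hy.1.1.2.1.symm) fun i j hij => ?_
  refine G.eq_of_sum_neighborFinset_div_add_div (X := fun i j => x i + x j)
    (Y := fun i j => y i + y j) (fun i j => add_pos_of_mem_simplexDomain hc hx.1.1)
    (fun i j => add_pos_of_mem_simplexDomain hc hy.1.1) ?_ hij
  simp only [sum_add_distrib, sum_div_eq_of_mem_faceSingularities hx hy.1,
    sum_div_eq_of_mem_faceSingularities hy hx.1]
  ring

end Faces

theorem lyap_strictly_concave_on_faces_general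
    {m : ℕ} {G : SimpleGraph (Fin m)} [DecidableRel G.Adj] {c : ℝ}
    (hconn : G.Connected)
    (hnbb : ¬ ∃ A : Finset (Fin m), (∀ i j, G.Adj i j → (i ∈ A ↔ j ∉ A)) ∧ 2 * A.card = m)
    (hc : 0 < c) :
    (∀ S : Finset (Fin m), StrictConcaveOn ℝ (faceDomain m G c S) (lyap m G 1)) ∧
    (∀ S : Finset (Fin m), (faceSingularities m G 1 c S).Subsingleton) ∧
    (⋃ S : Finset (Fin m), faceSingularities m G 1 c S).Finite := by
  have hbb : ¬ ∃ A, G.IsBalancedBipartition A := fun ⟨A, hA, hcard⟩ =>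
    hnbb ⟨A, hA, by simpa using hcard⟩
  have hsub := faceSingularities_subsingleton hc hconn hbb
  exact ⟨strictConcaveOn_lyap_one hc hconn hbb, hsub, Set.finite_iUnion fun S => (hsub S).finite⟩

/-- For a finite, connected, not balanced bipartite graph and `α = 1`, the restriction of
`L` to every face `Δ_S` is strictly concave; consequently each `Λ_S` contains at most one
point and `Λ = ⋃_S Λ_S` is finite. -/
theorem lyap_strictly_concave_on_faces
    {m : ℕ} {G : SimpleGraph (Fin m)} [DecidableRel G.Adj] {c : ℝ}
    (hconn : G.Connected)
    (hnbb : ¬ ∃ A : Finset (Fin m), (∀ i j, G.Adj i j → (i ∈ A ↔ j ∉ A)) ∧ 2 * A.card = m)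
    (hc : 0 < c) (hcN : c < 1 / (G.edgeFinset.card : ℝ)) :
    (∀ S : Finset (Fin m), StrictConcaveOn ℝ (faceDomain m G c S) (lyap m G 1)) ∧
    (∀ S : Finset (Fin m), (faceSingularities m G 1 c S).Subsingleton) ∧
    (⋃ S : Finset (Fin m), faceSingularities m G 1 c S).Finite :=
  lyap_strictly_concave_on_faces_general hconn hnbb hc
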